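/- arXiv:2503.06905 — 5 statements merged into one kernel-verified Lean document; each statement's English description precedes it below -/
import Mathlib

section
/- Let X be a normed space and f, g ∈ S_{X*} (norm-one functionals). Let 0 < ε < 1 and let A = {x ∈ B_X : f(x) > ε/2}. If inf g(A) > 0, then ‖f − g‖ < ε. -/
open Metric Set Pointwise

variable {X : Type*} [NormedAddCommGroup X] [NormedSpace ℝ X]

/-- The seminorm `‖f‖_A = sup {|f x| : x ∈ A}` on the dual. -/
noncomputable def dualSeminormOn (A : Set X) (f : X →L[ℝ] ℝ) : ℝ :=
  sSup ((fun x => |f x|) '' A)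

/-- The ball `B_A(f, ε)` for the seminorm `‖·‖_A`. -/
noncomputable def seminormBall (A : Set X) (f : X →L[ℝ] ℝ) (ε : ℝ) :
    Set (X →L[ℝ] ℝ) :=
  {g | dualSeminormOn A (g - f) < ε}

/-- `cone C = {λ • h : λ > 0, h ∈ C}`. -/
def coneOf (C : Set (X →L[ℝ] ℝ)) : Set (X →L[ℝ] ℝ) :=
  {g | ∃ l : ℝ, 0 < l ∧ ∃ h ∈ C, g = l • h}

/-- A set of functionals is weak*-open if it is open in the weak* topology. -/
def IsWeakStarOpen (U : Set (X →L[ℝ] ℝ)) : Prop :=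
  IsOpen (show Set (WeakDual ℝ X) from U)

/-- A compatible collection of bounded sets. -/
structure IsCompatible (𝒜 : Set (Set X)) : Prop where
  bounded : ∀ A ∈ 𝒜, Bornology.IsBounded A
  mem_of_subset : ∀ A ∈ 𝒜, ∀ C, C ⊆ A → C ∈ 𝒜
  translate_mem : ∀ A ∈ 𝒜, ∀ x : X, ((fun a => a + x) '' A) ∈ 𝒜
  union_singleton_mem : ∀ A ∈ 𝒜, ∀ x : X, (A ∪ {x}) ∈ 𝒜
  closure_absConvexHull_mem : ∀ A ∈ 𝒜, closure (absConvexHull ℝ A) ∈ 𝒜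

/-- `f₀` is an `𝒜`-semi point of continuity of `B_{X*}`. -/
def IsASemiPC (𝒜 : Set (Set X)) (f₀ : X →L[ℝ] ℝ) : Prop :=
  ∀ A ∈ 𝒜, ∀ ε > (0 : ℝ), ∃ U : Set (X →L[ℝ] ℝ), IsWeakStarOpen U ∧
    (U ∩ closedBall 0 1).Nonempty ∧
    U ∩ closedBall 0 1 ⊆ coneOf (seminormBall A f₀ ε)

/-- `f₀` is a strong `𝒜`-semi point of continuity of `B_{X*}`. -/
def IsStrongASemiPC (𝒜 : Set (Set X)) (f₀ : X →L[ℝ] ℝ) : Prop :=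
  ∀ A ∈ 𝒜, ∀ ε > (0 : ℝ), ∃ U : Set (X →L[ℝ] ℝ), IsWeakStarOpen U ∧
    (U ∩ closedBall 0 1).Nonempty ∧
    U ∩ closedBall 0 1 ⊆ seminormBall A f₀ ε

/-- A set is the closed convex hull of finitely many closed balls. -/
def IsFinBallHull (S : Set X) : Prop :=
  ∃ (n : ℕ) (c : Fin n → X) (r : Fin n → ℝ),
    S = closure (convexHull ℝ (⋃ i, closedBall (c i) (r i)))

/-- `X` has `𝒜`-Property (II). -/
def HasAPropertyII (𝒜 : Set (Set X)) : Prop :=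
  ∀ A ∈ 𝒜, IsClosed A → Convex ℝ A →
    ∃ ℱ : Set (Set X), (∀ S ∈ ℱ, IsFinBallHull S) ∧ A = ⋂₀ ℱ

/-- `X` has strong `𝒜`-Property (II). -/
def HasStrongAPropertyII (𝒜 : Set (Set X)) : Prop :=
  ∀ A ∈ 𝒜, Convex ℝ A → ∀ β : ℝ, 0 ≤ β →
    ∃ ℱ : Set (Set X), (∀ S ∈ ℱ, IsFinBallHull S) ∧
      closure (A + β • closedBall (0 : X) 1) = ⋂₀ ℱ


/-! For `x` in the unit ball and `y` ranging over it, the points `(1 - t) • x ± t • y` stay in the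
ball. Since `|f|, |g| ≤ 1` there, a weight `t` can be chosen so that `g` stays below some
`δ < inf g(A)` (resp. `f` stays above `ε / 2`) for every `y`; the slice condition then bounds
`t f y` (resp. `t g y`) uniformly in `y`, and the supremum over `y` replaces it by `t ‖f‖ = t`
(resp. `t ‖g‖ = t`). The resulting linear inequality between `f x` and `g x` gives
`f x - g x ≤ ε - δ` on the ball, hence `‖f - g‖ ≤ ε - δ < ε`. -/

theorem ContinuousLinearMap.norm_le_of_forall_apply_le {E : Type*} [NormedAddCommGroup E]
    [NormedSpace ℝ E] (φ : E →L[ℝ] ℝ) {c : ℝ} (h : ∀ x, ‖x‖ ≤ 1 → φ x ≤ c) : ‖φ‖ ≤ c := by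
  refine φ.opNorm_le_of_unit_norm (by simpa using h 0 (by simp)) fun x hx => ?_
  have hneg : -φ x ≤ c := by simpa using h (-x) (by simp [hx])
  exact abs_le.2 ⟨by linarith, h x hx.le⟩

theorem ContinuousLinearMap.abs_apply_le_one {E : Type*} [NormedAddCommGroup E]
    [NormedSpace ℝ E] {φ : E →L[ℝ] ℝ} (hφ : ‖φ‖ ≤ 1) {x : E} (hx : ‖x‖ ≤ 1) : |φ x| ≤ 1 :=
  (φ.le_opNorm_of_le hx).trans (by nlinarith [norm_nonneg φ])

theorem norm_convexCombination_le_one {x y : X} (hx : ‖x‖ ≤ 1) (hy : ‖y‖ ≤ 1) {t : ℝ}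
    (ht0 : 0 ≤ t) (ht1 : t ≤ 1) : ‖(1 - t) • x + t • y‖ ≤ 1 :=
  mem_closedBall_zero_iff.1 <| convex_closedBall (0 : X) 1 (mem_closedBall_zero_iff.2 hx)
    (mem_closedBall_zero_iff.2 hy) (sub_nonneg.2 ht1) ht0 (by ring)

section Slice

variable {f g : X →L[ℝ] ℝ} {m c : ℝ}

theorem apply_add_le_of_slice (hf : ‖f‖ = 1) (hg : ‖g‖ = 1)
    (hslice : ∀ p : X, ‖p‖ ≤ 1 → g p < m → f p ≤ c) {x : X} (hx : ‖x‖ ≤ 1) {t : ℝ}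
    (ht0 : 0 ≤ t) (ht1 : t ≤ 1) (h : (1 - t) * g x + t < m) : (1 - t) * f x + t ≤ c := by
  have hbound : ∀ y : X, ‖y‖ ≤ 1 → (t • f) y ≤ c - (1 - t) * f x := by
    intro y hy
    have hgy := (abs_le.1 (g.abs_apply_le_one hg.le hy)).2
    have hp := hslice _ (norm_convexCombination_le_one hx hy ht0 ht1)
      (by simp only [map_add, map_smul, smul_eq_mul]; nlinarith)
    simp only [map_add, map_smul, smul_eq_mul] at hp
    simp only [smul_apply, smul_eq_mul]
    linarith
  have := (t • f).norm_le_of_forall_apply_le hbound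
  rw [norm_smul, hf, Real.norm_of_nonneg ht0] at this
  linarith

theorem apply_sub_le_of_slice (hf : ‖f‖ = 1) (hg : ‖g‖ = 1)
    (hslice : ∀ p : X, ‖p‖ ≤ 1 → g p < m → f p ≤ c) {x : X} (hx : ‖x‖ ≤ 1) {t : ℝ}
    (ht0 : 0 ≤ t) (ht1 : t ≤ 1) (h : (1 - t) * g x - t < m) : (1 - t) * f x - t ≤ c := by
  by_contra! hlt
  have hbound : ∀ z : X, ‖z‖ ≤ 1 → (t • g) z ≤ (1 - t) * g x - m := by
    intro z hz
    have hfz := (abs_le.1 (f.abs_apply_le_one hf.le hz)).2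
    have hp := mt (hslice _ (norm_convexCombination_le_one hx (norm_neg z ▸ hz) ht0 ht1))
      (by simp only [map_add, map_smul, map_neg, smul_eq_mul]; nlinarith)
    simp only [map_add, map_smul, map_neg, smul_eq_mul] at hp
    simp only [smul_apply, smul_eq_mul]
    linarith
  have := (t • g).norm_le_of_forall_apply_le hbound
  rw [norm_smul, hg, Real.norm_of_nonneg ht0] at this
  linarith

theorem sub_apply_le_of_slice (hf : ‖f‖ = 1) (hg : ‖g‖ = 1)
    (hslice : ∀ p : X, ‖p‖ ≤ 1 → g p < m → f p ≤ c) {δ : ℝ} (hδ0 : 0 ≤ δ) (hδm : δ < m)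
    (hδc : δ ≤ c) (hc : c ≤ 1 / 2) {x : X} (hx : ‖x‖ ≤ 1) : f x - g x ≤ 2 * c - δ := by
  obtain ⟨hgx₁, hgx₂⟩ := abs_le.1 (g.abs_apply_le_one hg.le hx)
  rcases le_total (g x) δ with hgδ | hδg
  · have hpos : 0 < 1 - g x := by linarith
    set t := (δ - g x) / (1 - g x)
    have ht : t * (1 - g x) = δ - g x := div_mul_cancel₀ _ hpos.ne'
    have ht0 : 0 ≤ t := div_nonneg (by linarith) hpos.le
    have ht1 : t ≤ 1 := (div_le_one hpos).2 (by linarith)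
    have key := apply_add_le_of_slice hf hg hslice hx ht0 ht1 (by linarith)
    nlinarith [mul_nonneg (sub_nonneg.2 key) hpos.le]
  · have hpos : 0 < 1 + g x := by linarith
    set t := (g x - δ) / (1 + g x)
    have ht : t * (1 + g x) = g x - δ := div_mul_cancel₀ _ hpos.ne'
    have ht0 : 0 ≤ t := div_nonneg (by linarith) hpos.le
    have ht1 : t ≤ 1 := (div_le_one hpos).2 (by linarith)
    have key := apply_sub_le_of_slice hf hg hslice hx ht0 ht1 (by linarith)
    nlinarith [mul_nonneg (sub_nonneg.2 key) hpos.le]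

end Slice

theorem stmt0 {X : Type*} [NormedAddCommGroup X] [NormedSpace ℝ X]
    (f g : X →L[ℝ] ℝ) (hf : ‖f‖ = 1) (hg : ‖g‖ = 1) (ε : ℝ) (hε0 : 0 < ε) (hε1 : ε < 1)
    (A : Set X) (hA : A = {x ∈ closedBall (0 : X) 1 | ε / 2 < f x})
    (hinf : 0 < sInf (g '' A)) :
    ‖f - g‖ < ε := by
  subst hA
  set m := sInf (g '' {x ∈ closedBall (0 : X) 1 | ε / 2 < f x})
  have hbdd : BddBelow (g '' {x ∈ closedBall (0 : X) 1 | ε / 2 < f x}) := by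
    refine ⟨-1, ?_⟩
    rintro _ ⟨q, hq, rfl⟩
    exact (abs_le.1 (g.abs_apply_le_one hg.le (mem_closedBall_zero_iff.1 hq.1))).1
  have hslice : ∀ p : X, ‖p‖ ≤ 1 → g p < m → f p ≤ ε / 2 := fun p hp hgp => by
    by_contra! hfp
    exact hgp.not_ge (csInf_le hbdd ⟨p, ⟨mem_closedBall_zero_iff.2 hp, hfp⟩, rfl⟩)
  have hδm : min m ε / 2 < m := by linarith [min_le_left m ε]
  have hδε : min m ε / 2 ≤ ε / 2 := by linarith [min_le_right m ε]
  have hδ0 : 0 < min m ε / 2 := by positivity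
  have hnorm : ‖f - g‖ ≤ 2 * (ε / 2) - min m ε / 2 :=
    (f - g).norm_le_of_forall_apply_le fun x hx =>
      sub_apply_le_of_slice hf hg hslice hδ0.le hδm hδε (by linarith) hx
  linarith
end

section
/- Let 𝒜 be a compatible collection of bounded subsets of a Banach space X and f₀ ∈ S_{X*}. If f₀ is an 𝒜-semi point of continuity of B_{X*}, then for any A ∈ 𝒜 and x₀ ∈ X with inf f₀(A) > f₀(x₀), there exist finitely many closed balls B₁,…,B_n in X such that A ⊆ closed convex hull of (B₁ ∪ … ∪ B_n) and x₀ ∉ closed convex hull of (B₁ ∪ … ∪ B_n). -/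
open Metric Set Pointwise

variable {X : Type*} [NormedAddCommGroup X] [NormedSpace ℝ X]

/-!
Translate `A` by `-x₀`. The semi-PC property yields a weak*-open `U` meeting `B_{X*}` at some `g₀`
such that every `g ∈ U ∩ B_{X*}` is a positive multiple of a functional close to `f₀` on `A - x₀`;
hence, for a suitable point `z` of the segment from `x₀` into `A`, `g x₀ < g z ≤ inf g(A)`.
Shrink `U` to the neighbourhood `|g w - 1| < η`, `g y < η` (`y ∈ Y`), where `g₀ w = 1` and `Y` is a
finite symmetric subset of `ker g₀`. Every functional `f` then falls into one of three classes:
`-f` is a positive multiple of a point of this neighbourhood (so `f ≤ f z` on `A`), or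
`f w ≥ (η - 1) ‖f‖`, or `f y ≥ η ‖f‖` for some `y ∈ Y`; in the last two cases a large ball far out
in the direction `w`, resp. the point `x₀ + w + M • y`, dominates `A` in the direction `f`.
By Hahn–Banach, `A` lies in the closed convex hull of these finitely many balls, while `g₀` exceeds
`g₀ x₀` by a fixed margin on all of them, which keeps `x₀` out.
-/

theorem abs_sub_lt_of_dualSeminormOn_lt {B : Set X} (hB : Bornology.IsBounded B)
    {f g : X →L[ℝ] ℝ} {ε : ℝ} (h : dualSeminormOn B (g - f) < ε) {y : X} (hy : y ∈ B) :
    |g y - f y| < ε := by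
  obtain ⟨C, hC⟩ := isBounded_iff_forall_norm_le.1 ((g - f).lipschitz.isBounded_image hB)
  have hbdd : BddAbove ((fun x => |(g - f) x|) '' B) := by
    refine ⟨C, ?_⟩
    rintro _ ⟨x, hx, rfl⟩
    exact hC _ ⟨x, hx, rfl⟩
  exact (le_csSup hbdd ⟨y, hy, rfl⟩).trans_lt h

namespace ContinuousLinearMap

theorem abs_sub_apply_le_of_mem_closedBall (f : X →L[ℝ] ℝ) {c y : X} {r : ℝ}
    (hy : y ∈ closedBall c r) : |f y - f c| ≤ r * ‖f‖ := by
  rw [← map_sub, mul_comm]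
  calc |f (y - c)| ≤ ‖f‖ * ‖y - c‖ := f.le_opNorm _
    _ ≤ ‖f‖ * r := by gcongr; rwa [← dist_eq_norm]

theorem add_mul_norm_le_of_forall_lt (f : X →L[ℝ] ℝ) {c : X} {r u : ℝ} (hr : 0 ≤ r)
    (h : ∀ y ∈ closedBall c r, f y < u) : f c + r * ‖f‖ ≤ u := by
  rcases hr.eq_or_lt with rfl | hr
  · simpa using (h c (mem_closedBall_self le_rfl)).le
  have hnorm : ‖f‖ ≤ (u - f c) / r := by
    refine f.opNorm_bound_of_ball_bound hr _ fun y hy => ?_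
    have hy' : ‖y‖ ≤ r := mem_closedBall_zero_iff.1 hy
    have h₁ := h (c + y) (by simpa [mem_closedBall, dist_eq_norm] using hy')
    have h₂ := h (c - y) (by simpa [mem_closedBall, dist_eq_norm] using hy')
    rw [map_add] at h₁
    rw [map_sub] at h₂
    exact abs_le.2 ⟨by linarith, by linarith⟩
  linarith [(le_div_iff₀ hr).1 hnorm]

end ContinuousLinearMap

theorem exists_fin_iUnion_closedBall_eq {E : Type*} [PseudoMetricSpace E] {S : Set (E × ℝ)}
    (hS : S.Finite) : ∃ (n : ℕ) (c : Fin n → E) (r : Fin n → ℝ),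
      ⋃ i, closedBall (c i) (r i) = ⋃ p ∈ S, closedBall p.1 p.2 := by
  have := hS.to_subtype
  obtain ⟨n, ⟨e⟩⟩ := Finite.exists_equiv_fin S
  refine ⟨n, fun i => (e.symm i).1.1, fun i => (e.symm i).1.2, ?_⟩
  rw [biUnion_eq_iUnion]
  exact e.symm.iSup_comp (g := fun p : S => closedBall p.1.1 p.1.2)

section BallHull

variable {S : Set (X × ℝ)}

theorem mem_closure_convexHull_biUnion_closedBall (hS : ∀ p ∈ S, 0 ≤ p.2) {a : X}
    (h : ∀ f : X →L[ℝ] ℝ, ∃ p ∈ S, f a ≤ f p.1 + p.2 * ‖f‖) :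
    a ∈ closure (convexHull ℝ (⋃ p ∈ S, closedBall p.1 p.2)) := by
  by_contra ha
  obtain ⟨f, u, hfu, hua⟩ :=
    geometric_hahn_banach_closed_point (convex_convexHull ℝ _).closure isClosed_closure ha
  obtain ⟨p, hp, hap⟩ := h f
  have := f.add_mul_norm_le_of_forall_lt (hS p hp) fun y hy =>
    hfu y (subset_closure (subset_convexHull ℝ _ (mem_biUnion hp hy)))
  linarith

theorem notMem_closure_convexHull_biUnion_closedBall {g : X →L[ℝ] ℝ} {x : X} {κ : ℝ}
    (hκ : 0 < κ) (h : ∀ p ∈ S, g x + κ ≤ g p.1 - p.2 * ‖g‖) :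
    x ∉ closure (convexHull ℝ (⋃ p ∈ S, closedBall p.1 p.2)) := by
  have hsub : closure (convexHull ℝ (⋃ p ∈ S, closedBall p.1 p.2)) ⊆ {y | g x + κ ≤ g y} := by
    refine closure_minimal (convexHull_min ?_ (convex_halfSpace_ge g.isLinear _))
      (isClosed_le continuous_const g.continuous)
    simp only [iUnion_subset_iff]
    intro p hp y hy
    show g x + κ ≤ g y
    linarith [h p hp, (abs_le.1 (g.abs_sub_apply_le_of_mem_closedBall hy)).1]
  exact fun hx => (lt_add_of_pos_right _ hκ).not_ge (hsub hx)

end BallHull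

theorem IsWeakStarOpen.exists_finset_abs_sub_lt {U : Set (X →L[ℝ] ℝ)} (hU : IsWeakStarOpen U)
    {g₀ : X →L[ℝ] ℝ} (hg₀ : g₀ ∈ U) :
    ∃ I : Finset X, ∃ δ > 0, ∀ g : X →L[ℝ] ℝ, (∀ y ∈ I, |g y - g₀ y| < δ) → g ∈ U := by
  obtain ⟨I, δ, hδ, hball⟩ := ((topDualPairing ℝ X).weakBilin_withSeminorms.mem_nhds_iff
    (g₀ : WeakDual ℝ X) _).1 (hU.mem_nhds hg₀)
  refine ⟨I, δ, hδ, fun g hg => hball ?_⟩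
  change (I.sup (topDualPairing ℝ X).toSeminormFamily) (g - g₀) < δ
  exact Seminorm.finset_sup_apply_lt hδ fun y hy => hg y hy

/-- With `Y ⊆ ker g₀` and `g₀ w = 1`, this is a weak*-neighbourhood of `g₀` in `B_{X*}`. -/
def dualUnitBallNbhd (Y : Set X) (w : X) (η : ℝ) : Set (X →L[ℝ] ℝ) :=
  {g | ‖g‖ ≤ 1 ∧ (∀ y ∈ Y, g y < η) ∧ |g w - 1| < η}

theorem exists_dualUnitBallNbhd_subset (g₀ : X →L[ℝ] ℝ) {w : X} (hw : g₀ w = 1) (I : Finset X)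
    {δ : ℝ} (hδ : 0 < δ) :
    ∃ η > 0, ∃ Y : Set X, Y.Finite ∧ (∀ y ∈ Y, g₀ y = 0 ∧ -y ∈ Y) ∧
      ∀ g ∈ dualUnitBallNbhd Y w η, ∀ y ∈ I, |g y - g₀ y| < δ := by
  set T := ∑ y ∈ I, |g₀ y|
  have hT : 0 ≤ T := by positivity
  set η := δ / (2 * (T + 1))
  have hηT : η * (T + 1) = δ / 2 := by simp only [η]; field_simp
  set π : X → X := fun y => y - g₀ y • w
  refine ⟨η, by positivity, π '' I ∪ (fun y => -π y) '' I,
    (I.finite_toSet.image _).union (I.finite_toSet.image _), ?_, ?_⟩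
  · rintro _ (⟨y, hy, rfl⟩ | ⟨y, hy, rfl⟩)
    · exact ⟨by simp [π, hw], Or.inr ⟨y, hy, rfl⟩⟩
    · exact ⟨by simp [π, hw], Or.inl ⟨y, hy, by simp⟩⟩
  · rintro g ⟨-, hgY, hgw⟩ y hy
    have hπ : |g (π y)| < η := abs_lt.2
      ⟨by linarith [hgY _ (Or.inr ⟨y, hy, rfl⟩), map_neg g (π y)], hgY _ (Or.inl ⟨y, hy, rfl⟩)⟩
    have hgy : g y - g₀ y = g (π y) + g₀ y * (g w - 1) := by
      simp only [π, map_sub, map_smul, smul_eq_mul]; ring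
    have hT' : |g₀ y| ≤ T :=
      Finset.single_le_sum (f := fun y => |g₀ y|) (fun _ _ => abs_nonneg _) hy
    calc |g y - g₀ y| ≤ |g (π y)| + |g₀ y| * |g w - 1| := by
          rw [hgy, ← abs_mul]; exact abs_add_le _ _
      _ ≤ η + T * η := by gcongr
      _ = δ / 2 := by linarith
      _ < δ := by linarith

theorem exists_pos_smul_mem_dualUnitBallNbhd {Y : Set X} {w : X} {η : ℝ} (hη : 0 < η)
    {g : X →L[ℝ] ℝ} (hY : ∀ y ∈ Y, g y < η * ‖g‖) (hw : (1 - η) * ‖g‖ < g w) :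
    ∃ t : ℝ, 0 < t ∧ t • g ∈ dualUnitBallNbhd Y w η := by
  have hg : 0 < ‖g‖ := by
    refine (norm_nonneg g).lt_of_ne fun h => ?_
    rw [← h, mul_zero, norm_eq_zero.1 h.symm] at hw
    simp at hw
  set m := max (g w) ‖g‖ with hm_def
  have hm : 0 < m := hg.trans_le (le_max_right _ _)
  refine ⟨m⁻¹, inv_pos.2 hm, ?_, fun y hy => ?_, ?_⟩
  · rw [norm_smul, Real.norm_of_nonneg (inv_pos.2 hm).le, inv_mul_le_one₀ hm]
    exact le_max_right _ _
  · rw [smul_apply, smul_eq_mul, inv_mul_lt_iff₀ hm]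
    exact (hY y hy).trans_le (by rw [mul_comm]; gcongr; exact le_max_right _ _)
  · rw [smul_apply, smul_eq_mul]
    rcases le_total (g w) ‖g‖ with h | h
    · rw [hm_def, max_eq_right h, abs_sub_lt_iff, inv_mul_eq_div]
      constructor
      · linarith [div_le_one_of_le₀ h hg.le]
      · rw [sub_lt_comm, lt_div_iff₀ hg]; linarith
    · rw [hm_def, max_eq_left h, inv_mul_cancel₀ (hg.trans_le h).ne', sub_self, abs_zero]
      exact hη

/-- The balls (as centre–radius pairs) separating `x₀` from `A ⊆ closedBall x₀ K`: the point `z`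
handles the functionals `f` with `-f` in the cone over `dualUnitBallNbhd Y w η`, the large ball
those with `f w ≥ (η - 1) ‖f‖`, and the points `x₀ + w + M • y` those with `f y ≥ η ‖f‖`. -/
def separatingBalls (x₀ z w : X) (Y : Set X) (K η b : ℝ) : Set (X × ℝ) :=
  insert (z, 0) <| insert (x₀ + ((K + 1) / η + 1) • w, (K + 1) / η / b) <|
    (fun y => (x₀ + w + ((K + ‖w‖) / η) • y, 0)) '' Y

section SeparatingBalls

variable {x₀ z w : X} {Y : Set X} {K η b : ℝ}

theorem separatingBalls_finite (hY : Y.Finite) : (separatingBalls x₀ z w Y K η b).Finite :=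
  ((hY.image _).insert _).insert _

theorem separatingBalls_radius_nonneg (hK : 0 ≤ K) (hη : 0 < η) (hb : 0 ≤ b) :
    ∀ p ∈ separatingBalls x₀ z w Y K η b, 0 ≤ p.2 := by
  rintro _ (rfl | rfl | ⟨y, -, rfl⟩)
  · exact le_rfl
  · positivity
  · exact le_rfl

theorem add_min_le_of_mem_separatingBalls {g₀ : X →L[ℝ] ℝ} (hg₀ : 0 < ‖g₀‖)
    (hw : g₀ w = 1) (hY : ∀ y ∈ Y, g₀ y = 0) :
    ∀ p ∈ separatingBalls x₀ z w Y K η ‖g₀‖,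
      g₀ x₀ + min (g₀ z - g₀ x₀) 1 ≤ g₀ p.1 - p.2 * ‖g₀‖ := by
  rintro _ (rfl | rfl | ⟨y, hy, rfl⟩)
  · linarith [min_le_left (g₀ z - g₀ x₀) 1]
  · have : (K + 1) / η / ‖g₀‖ * ‖g₀‖ = (K + 1) / η := div_mul_cancel₀ _ hg₀.ne'
    simp only [map_add, map_smul, smul_eq_mul, hw, this]
    linarith [min_le_right (g₀ z - g₀ x₀) 1]
  · simp only [map_add, map_smul, smul_eq_mul, hw, hY y hy]
    linarith [min_le_right (g₀ z - g₀ x₀) 1]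

theorem exists_mem_separatingBalls_le {A : Set X} (hK : 0 ≤ K) (hAK : A ⊆ closedBall x₀ K)
    (hη : 0 < η) (hb : 0 < b) (hb₁ : b ≤ 1) (hYneg : ∀ y ∈ Y, -y ∈ Y)
    (hV : ∀ g ∈ dualUnitBallNbhd Y w η, ∀ a ∈ A, g z ≤ g a) {a : X} (ha : a ∈ A)
    (f : X →L[ℝ] ℝ) : ∃ p ∈ separatingBalls x₀ z w Y K η b, f a ≤ f p.1 + p.2 * ‖f‖ := by
  have hfa : f a ≤ f x₀ + K * ‖f‖ := by
    linarith [(abs_le.1 (f.abs_sub_apply_le_of_mem_closedBall (hAK ha))).2]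
  by_cases hY : ∃ y ∈ Y, η * ‖f‖ ≤ f y
  · obtain ⟨y, hy, hfy⟩ := hY
    refine ⟨_, mem_insert_of_mem _ (mem_insert_of_mem _ ⟨y, hy, rfl⟩), ?_⟩
    have hfw : -(‖w‖ * ‖f‖) ≤ f w := by
      simpa using (abs_le.1 (f.abs_sub_apply_le_of_mem_closedBall
        (mem_closedBall_zero_iff.2 (le_refl ‖w‖)))).1
    have hM : (K + ‖w‖) / η * (η * ‖f‖) = (K + ‖w‖) * ‖f‖ := by field_simp
    have := mul_le_mul_of_nonneg_left hfy (by positivity : 0 ≤ (K + ‖w‖) / η)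
    simp only [map_add, map_smul, smul_eq_mul, zero_mul, add_zero]
    linarith
  by_cases hw : (η - 1) * ‖f‖ ≤ f w
  · refine ⟨_, mem_insert_of_mem _ (mem_insert _ _), ?_⟩
    set Q := (K + 1) / η
    have hQ : Q * η * ‖f‖ = (K + 1) * ‖f‖ := by rw [div_mul_cancel₀ _ hη.ne']
    have hQb : Q ≤ Q / b := le_div_self (by positivity) hb hb₁
    have := mul_le_mul_of_nonneg_left hw (by positivity : 0 ≤ Q + 1)
    have := mul_le_mul_of_nonneg_right hQb (norm_nonneg f)
    simp only [map_add, map_smul, smul_eq_mul]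
    linarith [mul_nonneg hη.le (norm_nonneg f)]
  push Not at hY hw
  obtain ⟨t, ht, hmem⟩ := exists_pos_smul_mem_dualUnitBallNbhd hη (g := -f)
    (fun y hy => by simpa using hY (-y) (hYneg y hy)) (by simp only [neg_apply, norm_neg]; linarith)
  refine ⟨(z, 0), mem_insert _ _, ?_⟩
  have := hV _ hmem a ha
  simp only [smul_apply, neg_apply, smul_eq_mul, mul_neg, neg_le_neg_iff] at this
  simpa using le_of_mul_le_mul_left this ht

end SeparatingBalls

theorem exists_fin_closedBalls_separating {A : Set X} {x₀ z w : X} {g₀ : X →L[ℝ] ℝ}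
    {Y : Set X} {K η : ℝ} (hK : 0 ≤ K) (hAK : A ⊆ closedBall x₀ K) (hg₀ : ‖g₀‖ ≤ 1)
    (hz : g₀ x₀ < g₀ z) (hw : g₀ w = 1) (hη : 0 < η) (hY : Y.Finite)
    (hYker : ∀ y ∈ Y, g₀ y = 0 ∧ -y ∈ Y) (hV : ∀ g ∈ dualUnitBallNbhd Y w η, ∀ a ∈ A, g z ≤ g a) :
    ∃ (n : ℕ) (c : Fin n → X) (r : Fin n → ℝ),
      A ⊆ closure (convexHull ℝ (⋃ i, closedBall (c i) (r i))) ∧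
      x₀ ∉ closure (convexHull ℝ (⋃ i, closedBall (c i) (r i))) := by
  have hb : 0 < ‖g₀‖ := norm_pos_iff.2 fun h => by simp [h] at hz
  obtain ⟨n, c, r, hS⟩ := exists_fin_iUnion_closedBall_eq
    (separatingBalls_finite hY : (separatingBalls x₀ z w Y K η ‖g₀‖).Finite)
  refine ⟨n, c, r, ?_, ?_⟩ <;> rw [hS]
  · exact fun a ha => mem_closure_convexHull_biUnion_closedBall
      (separatingBalls_radius_nonneg hK hη hb.le)
      (exists_mem_separatingBalls_le hK hAK hη hb hg₀ (fun y hy => (hYker y hy).2) hV ha)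
  · exact notMem_closure_convexHull_biUnion_closedBall (lt_min (sub_pos.2 hz) one_pos)
      (add_min_le_of_mem_separatingBalls hb hw fun y hy => (hYker y hy).1)

theorem IsASemiPC.exists_weakStarOpen_le {𝒜 : Set (Set X)} (h𝒜 : IsCompatible 𝒜)
    {f₀ : X →L[ℝ] ℝ} (hpc : IsASemiPC 𝒜 f₀) {A : Set X} (hA : A ∈ 𝒜) {x₀ a₀ : X} {γ : ℝ}
    (hγ : 0 < γ) (hAγ : ∀ a ∈ A, f₀ x₀ + γ ≤ f₀ a) (ha₀ : a₀ ∈ A) :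
    ∃ U, IsWeakStarOpen U ∧ ∃ g₀ ∈ U, ‖g₀‖ ≤ 1 ∧ ∃ z : X, g₀ x₀ < g₀ z ∧
      ∀ g ∈ U, ‖g‖ ≤ 1 → ∀ a ∈ A, g z ≤ g a := by
  set A' := (fun a => a + -x₀) '' A
  have hA' : A' ∈ 𝒜 := h𝒜.translate_mem A hA (-x₀)
  obtain ⟨U, hU, ⟨g₀, hg₀U, hg₀⟩, hUcone⟩ := hpc A' hA' (γ / 2) (by positivity)
  set d := a₀ + -x₀
  have hd : γ ≤ f₀ d := by simp only [d, map_add, map_neg]; linarith [hAγ a₀ ha₀]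
  have hd' : 0 < f₀ d + γ / 2 := by linarith
  set ρ := γ / 2 / (f₀ d + γ / 2)
  have hρ : 0 < ρ := div_pos (by positivity) hd'
  have hρd : ρ * (f₀ d + γ / 2) = γ / 2 := div_mul_cancel₀ _ hd'.ne'
  -- `ρ` is chosen so that `h (ρ • d) < γ / 2 < h (a - x₀)` whenever `h` is `γ / 2`-close to `f₀`
  have key : ∀ h ∈ seminormBall A' f₀ (γ / 2), h x₀ < h (x₀ + ρ • d) ∧
      ∀ a ∈ A, h (x₀ + ρ • d) < h a := by
    intro h hh
    have hclose : ∀ a ∈ A, |h (a + -x₀) - f₀ (a + -x₀)| < γ / 2 := fun a ha =>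
      abs_sub_lt_of_dualSeminormOn_lt (h𝒜.bounded A' hA') hh ⟨a, ha, rfl⟩
    have hhd := abs_lt.1 (hclose a₀ ha₀)
    have hz : h (x₀ + ρ • d) = h x₀ + ρ * h d := by simp only [map_add, map_smul, smul_eq_mul]
    refine ⟨by rw [hz]; linarith [mul_pos hρ (by linarith : 0 < h d)], fun a ha => ?_⟩
    have hha := abs_lt.1 (hclose a ha)
    simp only [map_add, map_neg] at hha
    have := mul_lt_mul_of_pos_left hhd.2 hρ
    linarith [hAγ a ha]
  have hcone : ∀ g ∈ U, ‖g‖ ≤ 1 → g x₀ < g (x₀ + ρ • d) ∧ ∀ a ∈ A, g (x₀ + ρ • d) < g a := by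
    intro g hgU hg
    obtain ⟨l, hl, h, hh, rfl⟩ := hUcone ⟨hgU, mem_closedBall_zero_iff.2 hg⟩
    simp only [smul_apply, smul_eq_mul]
    exact ⟨mul_lt_mul_of_pos_left (key h hh).1 hl,
      fun a ha => mul_lt_mul_of_pos_left ((key h hh).2 a ha) hl⟩
  exact ⟨U, hU, g₀, hg₀U, mem_closedBall_zero_iff.1 hg₀, x₀ + ρ • d,
    (hcone g₀ hg₀U (mem_closedBall_zero_iff.1 hg₀)).1,
    fun g hgU hg a ha => ((hcone g hgU hg).2 a ha).le⟩

theorem stmt2_general {X : Type*} [NormedAddCommGroup X] [NormedSpace ℝ X]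
    (𝒜 : Set (Set X)) (h𝒜 : IsCompatible 𝒜)
    (f₀ : X →L[ℝ] ℝ) (hpc : IsASemiPC 𝒜 f₀) :
    ∀ A ∈ 𝒜, ∀ x₀ : X, f₀ x₀ < sInf (f₀ '' A) →
      ∃ (n : ℕ) (c : Fin n → X) (r : Fin n → ℝ),
        A ⊆ closure (convexHull ℝ (⋃ i, closedBall (c i) (r i))) ∧
        x₀ ∉ closure (convexHull ℝ (⋃ i, closedBall (c i) (r i))) := by
  intro A hA x₀ hx
  rcases A.eq_empty_or_nonempty with rfl | ⟨a₀, ha₀⟩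
  · exact ⟨0, Fin.elim0, Fin.elim0, by simp, by simp⟩
  have hAb := h𝒜.bounded A hA
  have hAγ : ∀ a ∈ A, f₀ x₀ + (sInf (f₀ '' A) - f₀ x₀) ≤ f₀ a := fun a ha => by
    linarith [csInf_le (f₀.lipschitz.isBounded_image hAb).bddBelow (mem_image_of_mem f₀ ha)]
  obtain ⟨U, hU, g₀, hg₀U, hg₀, z, hz, hUA⟩ :=
    hpc.exists_weakStarOpen_le h𝒜 hA (sub_pos.2 hx) hAγ ha₀
  obtain ⟨I, δ, hδ, hIU⟩ := hU.exists_finset_abs_sub_lt hg₀U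
  have hw : g₀ ((g₀ (z - x₀))⁻¹ • (z - x₀)) = 1 := by
    rw [map_smul, smul_eq_mul, inv_mul_cancel₀ (by rw [map_sub, sub_ne_zero]; exact hz.ne')]
  obtain ⟨η, hη, Y, hY, hYker, hYI⟩ := exists_dualUnitBallNbhd_subset g₀ hw I hδ
  obtain ⟨K, hK, hAK⟩ := hAb.subset_closedBall_lt 0 x₀
  exact exists_fin_closedBalls_separating hK.le hAK hg₀ hz hw hη hY hYker
    fun g hg => hUA g (hIU g (hYI g hg)) hg.1

theorem stmt2 {X : Type*} [NormedAddCommGroup X] [NormedSpace ℝ X] [CompleteSpace X]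
    (𝒜 : Set (Set X)) (h𝒜 : IsCompatible 𝒜)
    (f₀ : X →L[ℝ] ℝ) (hf₀ : ‖f₀‖ = 1) (hpc : IsASemiPC 𝒜 f₀) :
    ∀ A ∈ 𝒜, ∀ x₀ : X, f₀ x₀ < sInf (f₀ '' A) →
      ∃ (n : ℕ) (c : Fin n → X) (r : Fin n → ℝ),
        A ⊆ closure (convexHull ℝ (⋃ i, closedBall (c i) (r i))) ∧
        x₀ ∉ closure (convexHull ℝ (⋃ i, closedBall (c i) (r i))) :=
  stmt2_general 𝒜 h𝒜 f₀ hpc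
end

section
/- Let 𝒜 be a compatible collection of bounded subsets of a Banach space X and f₀ ∈ S_{X*}. Suppose that for any A ∈ 𝒜 and x₀ ∈ X with inf f₀(A) > f₀(x₀), there exist finitely many closed balls B₁,…,B_n in X such that A ⊆ closed convex hull of (B₁ ∪ … ∪ B_n) and x₀ ∉ closed convex hull of (B₁ ∪ … ∪ B_n). Then f₀ is an 𝒜-semi point of continuity of B_{X*}. -/
/-!
Project `A` onto `ker f₀` along a vector `z` with `f₀ z = 1`, and shift the symmetric projected
set up by `(ε/2) • z`; compatibility keeps the resulting set `H` in `𝒜`, and `f₀ ≡ ε/2` on it.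
The hypothesis separates `0` from `H` by a closed convex hull `D` of finitely many balls, and
Hahn–Banach gives a norm-one `h` with `h ≥ β > 0` on `D`. Requiring `g (cᵢ) > β/2 + rᵢ` at the
centres is a weak*-open condition that `h` satisfies, and for `‖g‖ ≤ 1` it forces `g ≥ β/2` on
each ball, hence on `D ⊇ H`. On `H` this says `g (z) > 0` and `|g (a - f₀ a • z)| ≤ (ε/2) g (z)`,
i.e. `g / g (z)` is within `ε/2` of `f₀` on `A`.
-/

open Metric Set Pointwise

variable {X : Type*} [NormedAddCommGroup X] [NormedSpace ℝ X]

theorem AbsConvex.add_smul_mem {s : Set X} (hs : AbsConvex ℝ s) {a z : X} {m t : ℝ}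
    (h₁ : a + m • z ∈ s) (h₂ : -a + m • z ∈ s) (ht : |t| ≤ m) : a + t • z ∈ s := by
  have h₃ : a - m • z ∈ s := by
    simpa [neg_add_eq_sub] using hs.1.neg_mem_iff.2 h₂
  rcases (abs_nonneg t |>.trans ht).eq_or_lt with rfl | hm
  · simpa [abs_nonpos_iff.1 ht] using h₁
  obtain ⟨ht₁, ht₂⟩ := abs_le.1 ht
  have hcomb := hs.2 h₃ h₁ (div_nonneg (by linarith : 0 ≤ m - t) (by linarith : 0 ≤ 2 * m))
    (div_nonneg (by linarith : 0 ≤ m + t) (by linarith : 0 ≤ 2 * m))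
    (by field_simp; ring)
  convert hcomb using 1
  match_scalars <;> field_simp <;> ring

namespace IsCompatible

variable {𝒜 : Set (Set X)} {A : Set X}

theorem exists_absConvex_mem (h𝒜 : IsCompatible 𝒜) (hA : A ∈ 𝒜) (v : X) :
    ∃ G ∈ 𝒜, AbsConvex ℝ G ∧ ∀ a ∈ A, a + v ∈ G ∧ -a + v ∈ G := by
  set K := closure (absConvexHull ℝ A)
  have hAK : ∀ a ∈ A, a ∈ K := fun a ha => subset_closure (subset_absConvexHull ha)
  have hAK' : ∀ a ∈ A, -a ∈ K := fun a ha =>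
    subset_closure (balanced_absConvexHull.neg_mem_iff.2 (subset_absConvexHull ha))
  have hG (x : X) (hx : x ∈ K) : x + v ∈ closure (absConvexHull ℝ ((· + v) '' K)) :=
    subset_closure (subset_absConvexHull ⟨x, hx, rfl⟩)
  exact ⟨_, h𝒜.closure_absConvexHull_mem _
      (h𝒜.translate_mem K (h𝒜.closure_absConvexHull_mem A hA) v),
    absConvex_absConvexHull.closure, fun a ha => ⟨hG a (hAK a ha), hG (-a) (hAK' a ha)⟩⟩

theorem exists_mem_ker (h𝒜 : IsCompatible 𝒜) (hA : A ∈ 𝒜) {f : X →L[ℝ] ℝ} {z : X}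
    (hz : f z = 1) :
    ∃ S ∈ 𝒜, 0 ∈ S ∧ (∀ x ∈ S, f x = 0) ∧
      ∀ a ∈ A, a - f a • z ∈ S ∧ -(a - f a • z) ∈ S := by
  obtain ⟨M, hM⟩ := isBounded_iff_forall_norm_le.1 (h𝒜.bounded A hA)
  have hfA : ∀ a ∈ A, |f a| ≤ ‖f‖ * M := fun a ha =>
    (f.le_opNorm a).trans (mul_le_mul_of_nonneg_left (hM a ha) (norm_nonneg f))
  obtain ⟨G, hG, hGconv, hAG⟩ := h𝒜.exists_absConvex_mem hA ((‖f‖ * M) • z)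
  have hfker : ∀ a, f (a - f a • z) = 0 := fun a => by simp [hz]
  have hfker' : ∀ a, f (-(a - f a • z)) = 0 := fun a => by rw [map_neg, hfker a, neg_zero]
  refine ⟨G ∩ {x | f x = 0} ∪ {0},
    h𝒜.union_singleton_mem _ (h𝒜.mem_of_subset G hG _ inter_subset_left) 0,
    Or.inr rfl, ?_, fun a ha => ⟨Or.inl ⟨?_, hfker a⟩, Or.inl ⟨?_, hfker' a⟩⟩⟩
  · rintro x (⟨-, hx⟩ | rfl)
    exacts [hx, map_zero f]
  · simpa [← sub_eq_add_neg] using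
      hGconv.add_smul_mem (hAG a ha).1 (hAG a ha).2 (t := -f a) (by simpa using hfA a ha)
  · simpa [neg_sub, neg_add_eq_sub] using
      hGconv.add_smul_mem (hAG a ha).2 (by simpa using (hAG a ha).1) (hfA a ha)

end IsCompatible

theorem isWeakStarOpen_setOf_forall_imp_lt {ι : Type*} [Finite ι] (p : ι → Prop) (x : ι → X)
    (t : ι → ℝ) : IsWeakStarOpen {g : X →L[ℝ] ℝ | ∀ i, p i → t i < g (x i)} := by
  have : {g : WeakDual ℝ X | ∀ i, p i → t i < g (x i)} =
      ⋂ i, ⋂ (_ : p i), {g : WeakDual ℝ X | t i < g (x i)} := by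
    ext; simp
  exact this ▸ isOpen_iInter_of_finite fun i => isOpen_iInter_of_finite fun _ =>
    isOpen_lt continuous_const (WeakDual.eval_continuous (x i))

theorem exists_norm_eq_one_forall_le_apply {D : Set X} (hDconv : Convex ℝ D)
    (hDclosed : IsClosed D) (hD : D.Nonempty) (h0 : (0 : X) ∉ D) :
    ∃ h : X →L[ℝ] ℝ, ‖h‖ = 1 ∧ ∃ β > 0, ∀ x ∈ D, β ≤ h x := by
  obtain ⟨φ, u, hu, hφ⟩ := geometric_hahn_banach_point_closed hDconv hDclosed h0
  rw [map_zero] at hu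
  obtain ⟨x₁, hx₁⟩ := hD
  have hφ0 : φ ≠ 0 := fun h => by simpa [h] using hu.trans (hφ x₁ hx₁)
  have hφpos : 0 < ‖φ‖ := norm_pos_iff.2 hφ0
  refine ⟨‖φ‖⁻¹ • φ, norm_smul_inv_norm hφ0, u / ‖φ‖, div_pos hu hφpos, fun x hx => ?_⟩
  rw [smul_apply, smul_eq_mul, div_eq_inv_mul]
  exact mul_le_mul_of_nonneg_left (hφ x hx).le (inv_nonneg.2 hφpos.le)

theorem add_mul_norm_le_apply_of_forall_closedBall (f : X →L[ℝ] ℝ) {c : X} {r u : ℝ}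
    (hr : 0 ≤ r) (h : ∀ x ∈ closedBall c r, u ≤ f x) : u + r * ‖f‖ ≤ f c := by
  rcases hr.eq_or_lt with rfl | hr
  · simpa using h c (mem_closedBall_self le_rfl)
  have hf : ‖f‖ ≤ (f c - u) / r := by
    refine f.opNorm_bound_of_ball_bound hr _ fun y hy => ?_
    have hy' : ‖y‖ ≤ r := mem_closedBall_zero_iff.1 hy
    have h₁ := h (c + y) (by simpa [mem_closedBall_iff_norm] using hy')
    have h₂ := h (c - y) (by simpa [mem_closedBall_iff_norm] using hy')
    rw [map_add] at h₁
    rw [map_sub] at h₂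
    exact abs_le.2 ⟨by linarith, by linarith⟩
  rw [le_div_iff₀ hr] at hf
  linarith

theorem le_apply_of_mem_closedBall {g : X →L[ℝ] ℝ} (hg : ‖g‖ ≤ 1) {c x : X} {r t : ℝ}
    (hc : t + r ≤ g c) (hx : x ∈ closedBall c r) : t ≤ g x := by
  have hgx : |g (x - c)| ≤ r :=
    calc |g (x - c)| ≤ ‖g‖ * ‖x - c‖ := g.le_opNorm _
      _ ≤ 1 * r := mul_le_mul hg (mem_closedBall_iff_norm.1 hx) (norm_nonneg _) zero_le_one
      _ = r := one_mul r
  have : g x = g c + g (x - c) := by simp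
  linarith [neg_abs_le (g (x - c))]

theorem closure_convexHull_subset_setOf_le (g : X →L[ℝ] ℝ) {s : Set X} {t : ℝ}
    (h : s ⊆ {x | t ≤ g x}) : closure (convexHull ℝ s) ⊆ {x | t ≤ g x} :=
  closure_minimal (convexHull_min h (convex_halfSpace_ge g.isLinear t))
    (isClosed_le continuous_const g.continuous)

theorem exists_isWeakStarOpen_subset_setOf_le {ι : Type*} [Finite ι] (c : ι → X) (r : ι → ℝ)
    (hD : (closure (convexHull ℝ (⋃ i, closedBall (c i) (r i)))).Nonempty)
    (h0 : (0 : X) ∉ closure (convexHull ℝ (⋃ i, closedBall (c i) (r i)))) :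
    ∃ β > 0, ∃ U : Set (X →L[ℝ] ℝ), IsWeakStarOpen U ∧ (U ∩ closedBall 0 1).Nonempty ∧
      ∀ g ∈ U ∩ closedBall 0 1,
        closure (convexHull ℝ (⋃ i, closedBall (c i) (r i))) ⊆ {x | β ≤ g x} := by
  obtain ⟨h, hh, β, hβ, hhD⟩ := exists_norm_eq_one_forall_le_apply
    (convex_convexHull ℝ _).closure isClosed_closure hD h0
  refine ⟨β / 2, half_pos hβ, {g | ∀ i, 0 ≤ r i → β / 2 + r i < g (c i)},
    isWeakStarOpen_setOf_forall_imp_lt _ _ _, ⟨h, fun i hri => ?_, by simp [hh]⟩, ?_⟩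
  · have := add_mul_norm_le_apply_of_forall_closedBall h hri fun x hx =>
      hhD x (subset_closure (subset_convexHull ℝ _ (mem_iUnion_of_mem i hx)))
    rw [hh, mul_one] at this
    linarith
  · rintro g ⟨hgU, hg⟩
    refine closure_convexHull_subset_setOf_le g (iUnion_subset fun i x hx => ?_)
    exact le_apply_of_mem_closedBall (mem_closedBall_zero_iff.1 hg)
      (hgU i (dist_nonneg.trans hx)).le hx

theorem dualSeminormOn_le {A : Set X} {f : X →L[ℝ] ℝ} {C : ℝ} (hC : 0 ≤ C)
    (h : ∀ a ∈ A, |f a| ≤ C) : dualSeminormOn A f ≤ C :=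
  Real.sSup_le (forall_mem_image.2 h) hC

theorem mem_coneOf_seminormBall_of_abs_le {A : Set X} {f₀ g : X →L[ℝ] ℝ} {z : X} {ε : ℝ}
    (hgz : 0 < g z) (hε : 0 < ε) (h : ∀ a ∈ A, |g (a - f₀ a • z)| ≤ ε / 2 * g z) :
    g ∈ coneOf (seminormBall A f₀ ε) := by
  refine ⟨g z, hgz, (g z)⁻¹ • g, ?_, (smul_inv_smul₀ hgz.ne' g).symm⟩
  refine (dualSeminormOn_le (half_pos hε).le fun a ha => ?_).trans_lt (half_lt_self hε)
  have : ((g z)⁻¹ • g - f₀) a = (g z)⁻¹ * g (a - f₀ a • z) := by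
    simp only [sub_apply, smul_apply, smul_eq_mul, map_sub, map_smul]
    field_simp
  rw [this, abs_mul, abs_inv, abs_of_pos hgz, inv_mul_le_iff₀ hgz]
  linarith [h a ha]

theorem stmt3_general {X : Type*} [NormedAddCommGroup X] [NormedSpace ℝ X]
    (𝒜 : Set (Set X)) (h𝒜 : IsCompatible 𝒜)
    (f₀ : X →L[ℝ] ℝ) (hf₀ : ‖f₀‖ = 1)
    (hsep : ∀ A ∈ 𝒜, ∀ x₀ : X, f₀ x₀ < sInf (f₀ '' A) →
      ∃ (n : ℕ) (c : Fin n → X) (r : Fin n → ℝ),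
        A ⊆ closure (convexHull ℝ (⋃ i, closedBall (c i) (r i))) ∧
        x₀ ∉ closure (convexHull ℝ (⋃ i, closedBall (c i) (r i)))) :
    IsASemiPC 𝒜 f₀ := by
  intro A hA ε hε
  obtain ⟨z₀, hz₀⟩ := DFunLike.ne_iff.1 (norm_ne_zero_iff.1 (hf₀ ▸ one_ne_zero) : f₀ ≠ 0)
  set z := (f₀ z₀)⁻¹ • z₀
  have hz : f₀ z = 1 := by simpa [z] using inv_mul_cancel₀ hz₀
  obtain ⟨S, hS, hS0, hSker, hSA⟩ := h𝒜.exists_mem_ker hA hz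
  set H := (· + (ε / 2) • z) '' S
  have hwH : (ε / 2) • z ∈ H := ⟨0, hS0, zero_add _⟩
  have hf₀H : ε / 2 ≤ sInf (f₀ '' H) := le_csInf ⟨_, mem_image_of_mem f₀ hwH⟩ <| by
    rintro _ ⟨_, ⟨x, hx, rfl⟩, rfl⟩
    simp [hSker x hx, hz]
  obtain ⟨n, c, r, hHD, h0D⟩ := hsep H (h𝒜.translate_mem S hS _) 0 (by rw [map_zero]; linarith)
  obtain ⟨β, hβ, U, hU, hUne, hUD⟩ := exists_isWeakStarOpen_subset_setOf_le c r ⟨_, hHD hwH⟩ h0D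
  refine ⟨U, hU, hUne, fun g hg => ?_⟩
  have hgS : ∀ x ∈ S, β ≤ g x + ε / 2 * g z := fun x hx => by
    simpa using hUD g hg (hHD ⟨x, hx, rfl⟩)
  have hgz : 0 < g z := by
    have := hgS 0 hS0
    rw [map_zero, zero_add] at this
    exact (mul_pos_iff_of_pos_left (half_pos hε)).1 (hβ.trans_le this)
  refine mem_coneOf_seminormBall_of_abs_le hgz hε fun a ha => abs_le.2 ⟨?_, ?_⟩
  · linarith [hgS _ (hSA a ha).1]
  · linarith [hgS _ (hSA a ha).2, map_neg g (a - f₀ a • z)]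

theorem stmt3 {X : Type*} [NormedAddCommGroup X] [NormedSpace ℝ X] [CompleteSpace X]
    (𝒜 : Set (Set X)) (h𝒜 : IsCompatible 𝒜)
    (f₀ : X →L[ℝ] ℝ) (hf₀ : ‖f₀‖ = 1)
    (hsep : ∀ A ∈ 𝒜, ∀ x₀ : X, f₀ x₀ < sInf (f₀ '' A) →
      ∃ (n : ℕ) (c : Fin n → X) (r : Fin n → ℝ),
        A ⊆ closure (convexHull ℝ (⋃ i, closedBall (c i) (r i))) ∧
        x₀ ∉ closure (convexHull ℝ (⋃ i, closedBall (c i) (r i)))) :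
    IsASemiPC 𝒜 f₀ :=
  stmt3_general 𝒜 h𝒜 f₀ hf₀ hsep
end

section
/- Let 𝒜 be a compatible collection of bounded subsets of a Banach space X. If the cone generated by the set of 𝒜-semi points of continuity of B_{X*} is τ_𝒜-dense in X*, then X has 𝒜-Property (II), i.e., every closed convex set A ∈ 𝒜 is an intersection of closed convex hulls of finitely many closed balls. -/
open Metric Set Pointwise

variable {X : Type*} [NormedAddCommGroup X] [NormedSpace ℝ X]

open Filter Topology

/-! Given a closed convex `A ∈ 𝒜` and `x₀ ∉ A`, separate `x₀` from `A` by a functional and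
approximate it on `B = cl absconv (A ∪ {x₀})` by a positive multiple of a semi point of continuity
`f₀`. Every functional in the cone over a small `‖·‖_B`-ball around `f₀` keeps `A` below its value
at one point `c` of a segment from `A` to `x₀`, and by semi-continuity this cone contains every
norm-one functional of a weak*-neighbourhood `{k | ∀ v ∈ V, k v > k' v - δ}` of a norm-one `k'`,
with `V` finite. Take a small ball around `c` and, for each `v ∈ V`, a ball far away on which `k'`
stays low but every functional leaving the neighbourhood through `v` exceeds `sup ‖A‖`. By
Hahn–Banach `A` lies in the closed convex hull of these balls, and `k'` separates it from `x₀`. -/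

lemma abs_apply_le_dualSeminormOn {B : Set X} (hB : Bornology.IsBounded B) (f : X →L[ℝ] ℝ)
    {y : X} (hy : y ∈ B) : |f y| ≤ dualSeminormOn B f := by
  obtain ⟨C, hC⟩ := isBounded_iff_forall_norm_le.1 hB
  refine le_csSup ⟨‖f‖ * C, ?_⟩ ⟨y, hy, rfl⟩
  rintro _ ⟨x, hx, rfl⟩
  exact (f.le_opNorm x).trans (mul_le_mul_of_nonneg_left (hC x hx) (norm_nonneg f))

lemma abs_sub_apply_lt_of_mem_seminormBall {B : Set X} (hB : Bornology.IsBounded B)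
    {f g : X →L[ℝ] ℝ} {ε : ℝ} (hg : g ∈ seminormBall B f ε) {y : X} (hy : y ∈ B) :
    |g y - f y| < ε :=
  (abs_apply_le_dualSeminormOn hB (g - f) hy).trans_lt hg

lemma smul_mem_coneOf {C : Set (X →L[ℝ] ℝ)} {k : X →L[ℝ] ℝ} (hk : k ∈ coneOf C) {t : ℝ}
    (ht : 0 < t) : t • k ∈ coneOf C := by
  obtain ⟨l, hl, h, hh, rfl⟩ := hk
  exact ⟨t * l, mul_pos ht hl, h, hh, smul_smul t l h⟩

lemma isFinBallHull_empty : IsFinBallHull (∅ : Set X) :=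
  ⟨0, Fin.elim0, Fin.elim0, by simp⟩

lemma isFinBallHull_of_fintype {ι : Type*} [Fintype ι] (c : ι → X) (r : ι → ℝ) :
    IsFinBallHull (closure (convexHull ℝ (⋃ i, closedBall (c i) (r i)))) := by
  let e := Fintype.equivFin ι
  exact ⟨_, c ∘ e.symm, r ∘ e.symm, by
    rw [← e.symm.surjective.iUnion_comp (fun i => closedBall (c i) (r i))]; rfl⟩

lemma exists_finset_subset_of_isWeakStarOpen {U : Set (X →L[ℝ] ℝ)} (hU : IsWeakStarOpen U)
    {k₁ : X →L[ℝ] ℝ} (hk₁ : k₁ ∈ U) :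
    ∃ I : Finset X, ∃ δ > 0, {k : X →L[ℝ] ℝ | ∀ x ∈ I, |k x - k₁ x| < δ} ⊆ U := by
  have hind : IsInducing fun (k : WeakDual ℝ X) (x : X) => k x := ⟨rfl⟩
  have hU' : (show Set (WeakDual ℝ X) from U) ∈ 𝓝 (show WeakDual ℝ X from k₁) :=
    hU.mem_nhds hk₁
  rw [hind.nhds_eq_comap, nhds_pi, mem_comap] at hU'
  obtain ⟨t, ht, htU⟩ := hU'
  obtain ⟨I, s, hs, hst⟩ := mem_pi'.1 ht
  have hδ : ∀ᶠ δ in 𝓝[>] (0 : ℝ), ∀ x ∈ I, ball (k₁ x) δ ⊆ s x := by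
    refine (eventually_all_finset I).2 fun x _ => ?_
    obtain ⟨ε, hε, hεs⟩ := Metric.mem_nhds_iff.1 (hs x)
    filter_upwards [Ioo_mem_nhdsGT hε] with δ hδ using (ball_subset_ball hδ.2.le).trans hεs
  obtain ⟨δ, hδs, hδ⟩ := (hδ.and self_mem_nhdsWithin).exists
  refine ⟨I, δ, hδ, fun k hk => htU (hst fun x hx => hδs x hx ?_)⟩
  rw [mem_ball, Real.dist_eq]
  exact hk x hx

lemma ContinuousLinearMap.exists_norm_le_one_lt_apply (f : X →L[ℝ] ℝ) {r : ℝ} (hr : r < ‖f‖) :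
    ∃ w : X, ‖w‖ ≤ 1 ∧ r < f w := by
  obtain ⟨x, hx, hrx⟩ := f.exists_lt_apply_of_lt_opNorm hr
  rw [Real.norm_eq_abs, lt_abs] at hrx
  rcases hrx with hrx | hrx
  · exact ⟨x, hx.le, hrx⟩
  · exact ⟨-x, by simpa using hx.le, by simpa using hrx⟩

lemma ContinuousLinearMap.apply_le_of_mem_closedBall (f : X →L[ℝ] ℝ) {z y : X} {ρ : ℝ}
    (hy : y ∈ closedBall z ρ) : f y ≤ f z + ‖f‖ * ρ := by
  have h := (Real.le_norm_self (f (y - z))).trans (f.le_opNorm (y - z))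
  rw [map_sub] at h
  have := mul_le_mul_of_nonneg_left (mem_closedBall_iff_norm.1 hy) (norm_nonneg f)
  linarith

lemma ContinuousLinearMap.add_le_of_forall_mem_closedBall (f : X →L[ℝ] ℝ) {z : X} {ρ s : ℝ}
    (hρ : 0 ≤ ρ) (h : ∀ y ∈ closedBall z ρ, f y ≤ s) : f z + ‖f‖ * ρ ≤ s := by
  rcases hρ.eq_or_lt with rfl | hρ
  · simpa using h z (mem_closedBall_self le_rfl)
  by_contra! hs
  obtain ⟨w, hw, hfw⟩ := f.exists_norm_le_one_lt_apply (r := (s - f z) / ρ)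
    (by rw [div_lt_iff₀ hρ]; linarith)
  have hy : z + ρ • w ∈ closedBall z ρ := by
    rw [mem_closedBall_iff_norm, add_sub_cancel_left, norm_smul, Real.norm_of_nonneg hρ.le]
    exact mul_le_of_le_one_right hρ.le hw
  have := h _ hy
  rw [map_add, map_smul, smul_eq_mul] at this
  rw [div_lt_iff₀ hρ] at hfw
  linarith

lemma mem_closure_convexHull_of_forall_exists_closedBall {T : Set X} (hT : T.Nonempty) {a : X}
    (h : ∀ k : X →L[ℝ] ℝ, ‖k‖ = 1 →
      ∃ z ρ, 0 ≤ ρ ∧ closedBall z ρ ⊆ T ∧ k a ≤ k z + ρ) :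
    a ∈ closure (convexHull ℝ T) := by
  by_contra ha
  obtain ⟨f, s, hfs, hsa⟩ :=
    geometric_hahn_banach_closed_point (convex_convexHull ℝ T).closure isClosed_closure ha
  have hf : f ≠ 0 := by
    rintro rfl
    obtain ⟨t, ht⟩ := hT
    have := hfs t (subset_closure (subset_convexHull ℝ T ht))
    simp only [zero_apply] at this hsa
    linarith
  have hf₀ : 0 < ‖f‖ := norm_pos_iff.2 hf
  obtain ⟨z, ρ, hρ, hzT, hza⟩ := h (‖f‖⁻¹ • f) (norm_smul_inv_norm hf)
  have hball := f.add_le_of_forall_mem_closedBall hρ fun y hy =>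
    (hfs y (subset_closure (subset_convexHull ℝ T (hzT hy)))).le
  simp only [smul_apply, smul_eq_mul] at hza
  have := mul_le_mul_of_nonneg_left hza hf₀.le
  rw [mul_add, ← mul_assoc, ← mul_assoc, mul_inv_cancel₀ hf₀.ne', one_mul, one_mul] at this
  linarith

lemma exists_far_closedBall {k' : X →L[ℝ] ℝ} (hk' : ‖k'‖ = 1) (v : X) {δ : ℝ}
    (hδ : 0 < δ) (R t : ℝ) :
    ∃ z ρ, 0 ≤ ρ ∧ k' z + ρ ≤ t ∧
      ∀ k : X →L[ℝ] ℝ, ‖k‖ ≤ 1 → k v ≤ k' v - δ → R ≤ k z + ρ := by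
  set C := |k' v| + δ
  have hC : 0 < C := by positivity
  obtain ⟨w, hw, hk'w⟩ := k'.exists_norm_le_one_lt_apply (r := 1 - δ / (2 * C))
    (by rw [hk']; linarith [div_pos hδ (mul_pos two_pos hC)])
  -- `k y ≤ β < k' y` for every relevant `k`, so on `closedBall (-lam • y) (|R| + lam * β)` the
  -- supremum of such a `k` is at least `|R|`, that of `k'` is `|R| - lam * (k' y - β) = -|t|`.
  set y := v + C • w
  set β := k' v + C - δ
  have hβ : 0 ≤ β := by simp only [β, C]; linarith [neg_abs_le (k' v)]
  have hgap : δ / 2 < k' y - β := by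
    have : C * (1 - δ / (2 * C)) < C * k' w := mul_lt_mul_of_pos_left hk'w hC
    have hCδ : C * (δ / (2 * C)) = δ / 2 := by field_simp
    simp only [y, β, map_add, map_smul, smul_eq_mul]
    linarith
  set lam := (|R| + |t|) / (k' y - β)
  have hlam : 0 ≤ lam := div_nonneg (by positivity) (by linarith)
  refine ⟨-lam • y, |R| + lam * β, by positivity, ?_, fun k hk hkv => ?_⟩
  · have : lam * (k' y - β) = |R| + |t| := div_mul_cancel₀ _ (by linarith)
    simp only [map_smul, smul_eq_mul]
    linarith [neg_abs_le t]
  · have hkw : k w ≤ 1 :=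
      (Real.le_norm_self _).trans ((k.le_opNorm w).trans (mul_le_one₀ hk (norm_nonneg w) hw))
    have hky : k y ≤ β := by
      simp only [y, β, map_add, map_smul, smul_eq_mul]
      nlinarith
    simp only [map_smul, smul_eq_mul]
    nlinarith [le_abs_self R]

lemma exists_isFinBallHull_superset_subset_halfSpace {A : Set X} (hA : Bornology.IsBounded A)
    {k' : X →L[ℝ] ℝ} (hk' : ‖k'‖ = 1) (V : Finset X) {δ : ℝ} (hδ : 0 < δ) {c : X} {r : ℝ}
    (hr : 0 ≤ r)
    (hAc : ∀ k : X →L[ℝ] ℝ, ‖k‖ = 1 → (∀ v ∈ V, k' v - δ < k v) → ∀ a ∈ A, k a ≤ k c + r) :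
    ∃ S, IsFinBallHull S ∧ A ⊆ S ∧ ∀ y ∈ S, k' y ≤ k' c + r := by
  obtain ⟨R, hR⟩ := isBounded_iff_forall_norm_le.1 hA
  choose z ρ hρ hk'z hfar using fun v : V =>
    exists_far_closedBall hk' v hδ R (k' c + r)
  let center : Option V → X := fun i => i.elim c z
  let radius : Option V → ℝ := fun i => i.elim r ρ
  have hball : ∀ i, closedBall (center i) (radius i) ⊆ ⋃ i, closedBall (center i) (radius i) :=
    fun i => subset_iUnion (fun i => closedBall (center i) (radius i)) i
  refine ⟨_, isFinBallHull_of_fintype center radius, fun a ha => ?_, ?_⟩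
  · refine mem_closure_convexHull_of_forall_exists_closedBall
      ⟨c, hball none (mem_closedBall_self hr)⟩ fun k hk => ?_
    by_cases hkV : ∀ v ∈ V, k' v - δ < k v
    · exact ⟨c, r, hr, hball none, hAc k hk hkV a ha⟩
    push Not at hkV
    obtain ⟨v, hv, hkv⟩ := hkV
    have hka : k a ≤ R :=
      (Real.le_norm_self _).trans ((k.le_opNorm a).trans (by rw [hk, one_mul]; exact hR a ha))
    exact ⟨z ⟨v, hv⟩, ρ ⟨v, hv⟩, hρ _, hball (some ⟨v, hv⟩),
      hka.trans (hfar ⟨v, hv⟩ k hk.le hkv)⟩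
  · refine fun y hy => closure_minimal (convexHull_min (iUnion_subset fun i => ?_)
      (convex_halfSpace_le k'.isLinear _)) (isClosed_le k'.continuous continuous_const) hy
    intro x hx
    have := k'.apply_le_of_mem_closedBall hx
    rw [hk', one_mul] at this
    rcases i with _ | v
    · exact this
    · exact this.trans (hk'z v)

lemma exists_norm_eq_one_forall_mem_coneOf {U C : Set (X →L[ℝ] ℝ)} (hU : IsWeakStarOpen U)
    (hne : (U ∩ closedBall 0 1).Nonempty) (hUC : U ∩ closedBall 0 1 ⊆ coneOf C)
    (h0 : (0 : X →L[ℝ] ℝ) ∉ coneOf C) :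
    ∃ k' : X →L[ℝ] ℝ, ‖k'‖ = 1 ∧ ∃ V : Finset X, ∃ δ > 0,
      ∀ k : X →L[ℝ] ℝ, ‖k‖ ≤ 1 → (∀ v ∈ V, k' v - δ < k v) → k ∈ coneOf C := by
  obtain ⟨k₁, hk₁U, hk₁B⟩ := hne
  have hk₁ : k₁ ≠ 0 := by rintro rfl; exact h0 (hUC ⟨hk₁U, hk₁B⟩)
  have hν : 0 < ‖k₁‖ := norm_pos_iff.2 hk₁
  have hν1 : ‖k₁‖ ≤ 1 := mem_closedBall_zero_iff.1 hk₁B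
  obtain ⟨I, δ₀, hδ₀, hIU⟩ := exists_finset_subset_of_isWeakStarOpen hU hk₁U
  classical
  refine ⟨‖k₁‖⁻¹ • k₁, norm_smul_inv_norm hk₁, I ∪ I.image Neg.neg, δ₀ / ‖k₁‖,
    div_pos hδ₀ hν, fun k hk hkV => ?_⟩
  have hkU : ‖k₁‖ • k ∈ U := hIU fun x hx => by
    have h₁ := hkV x (Finset.mem_union_left _ hx)
    have h₂ := hkV (-x) (Finset.mem_union_right _ (Finset.mem_image_of_mem _ hx))
    simp only [smul_apply, smul_eq_mul, map_neg] at h₁ h₂ ⊢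
    rw [show ‖k₁‖⁻¹ * k₁ x - δ₀ / ‖k₁‖ = (k₁ x - δ₀) / ‖k₁‖ by ring, div_lt_iff₀ hν] at h₁
    rw [show -(‖k₁‖⁻¹ * k₁ x) - δ₀ / ‖k₁‖ = (-k₁ x - δ₀) / ‖k₁‖ by ring, div_lt_iff₀ hν] at h₂
    rw [abs_sub_lt_iff]
    constructor <;> linarith
  have hkB : ‖k₁‖ • k ∈ closedBall (0 : X →L[ℝ] ℝ) 1 := by
    rw [mem_closedBall_zero_iff, norm_smul, norm_norm]
    nlinarith [norm_nonneg k]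
  simpa [smul_smul, inv_mul_cancel₀ hν.ne'] using smul_mem_coneOf (hUC ⟨hkU, hkB⟩) (inv_pos.2 hν)

lemma exists_forall_mem_coneOf_seminormBall {A B : Set X} (hB : Bornology.IsBounded B)
    (hAB : A ⊆ B) {a₀ x₀ : X} (ha₀ : a₀ ∈ A) (hx₀ : x₀ ∈ B) {f₀ : X →L[ℝ] ℝ} {p : ℝ}
    (hp : ∀ a ∈ A, f₀ a ≤ p) (hpx : p < f₀ x₀) :
    ∃ ε > 0, ∃ c : X, ∀ k ∈ coneOf (seminormBall B f₀ ε), (∀ a ∈ A, k a ≤ k c) ∧ k c < k x₀ := by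
  set ε := (f₀ x₀ - p) / 4
  have hε : 0 < ε := by simp only [ε]; linarith
  have hεx : f₀ x₀ = p + 4 * ε := by simp only [ε]; ring
  have hs : 0 ≤ p - f₀ a₀ := sub_nonneg.2 (hp a₀ ha₀)
  -- `θ` makes `(1 - θ) * (f₀ a₀ - ε) + θ * (f₀ x₀ - ε) = p + ε`
  set θ := (p - f₀ a₀ + 2 * ε) / (p - f₀ a₀ + 4 * ε)
  have hθ : θ * (p - f₀ a₀ + 4 * ε) = p - f₀ a₀ + 2 * ε := div_mul_cancel₀ _ (by positivity)
  have hθ0 : 0 ≤ θ := by positivity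
  have hθ1 : θ < 1 := (div_lt_one (by positivity)).2 (by linarith)
  refine ⟨ε, hε, a₀ + θ • (x₀ - a₀), ?_⟩
  rintro _ ⟨μ, hμ, m, hm, rfl⟩
  simp only [smul_apply, smul_eq_mul]
  suffices h : (∀ a ∈ A, m a ≤ m (a₀ + θ • (x₀ - a₀))) ∧ m (a₀ + θ • (x₀ - a₀)) < m x₀ from
    ⟨fun a ha => mul_le_mul_of_nonneg_left (h.1 a ha) hμ.le, mul_lt_mul_of_pos_left h.2 hμ⟩
  have close := fun (y : X) (hy : y ∈ B) =>
    abs_lt.1 (abs_sub_apply_lt_of_mem_seminormBall hB hm hy)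
  obtain ⟨ha₀₁, ha₀₂⟩ := close a₀ (hAB ha₀)
  obtain ⟨hx₀₁, -⟩ := close x₀ hx₀
  simp only [map_add, map_smul, map_sub, smul_eq_mul]
  refine ⟨fun a ha => ?_, ?_⟩
  · obtain ⟨-, ha₂⟩ := close a (hAB ha)
    have := hp a ha
    nlinarith [mul_le_mul_of_nonneg_left hx₀₁.le hθ0,
      mul_le_mul_of_nonneg_left ha₀₁.le (sub_nonneg.2 hθ1.le)]
  · nlinarith [mul_pos (sub_pos.2 hθ1) (show 0 < m x₀ - m a₀ by linarith [hp a₀ ha₀])]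

lemma exists_separating_of_dualSeminormOn_sub_lt {A B : Set X} (hB : Bornology.IsBounded B)
    (hAB : A ⊆ B) {x₀ : X} (hx₀ : x₀ ∈ B) {g f : X →L[ℝ] ℝ} {u l : ℝ} (hg : ∀ a ∈ A, g a ≤ u)
    (hl : 0 < l) (hgf : dualSeminormOn B (g - l • f) < (g x₀ - u) / 2) :
    ∃ p, (∀ a ∈ A, f a ≤ p) ∧ p < f x₀ := by
  have close : ∀ y ∈ B, |g y - l * f y| < (g x₀ - u) / 2 := fun y hy =>
    (abs_apply_le_dualSeminormOn hB (g - l • f) hy).trans_lt hgf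
  refine ⟨(u + (g x₀ - u) / 2) / l, fun a ha => ?_, ?_⟩
  · rw [le_div_iff₀ hl]
    linarith [(abs_lt.1 (close a (hAB ha))).1, hg a ha]
  · rw [div_lt_iff₀ hl]
    linarith [(abs_lt.1 (close x₀ hx₀)).2]

lemma exists_isFinBallHull_superset_notMem {𝒜 : Set (Set X)} (h𝒜 : IsCompatible 𝒜)
    (hdense : ∀ g : X →L[ℝ] ℝ, ∀ B ∈ 𝒜, ∀ ε > (0 : ℝ),
      ∃ h ∈ coneOf {f : X →L[ℝ] ℝ | IsASemiPC 𝒜 f}, dualSeminormOn B (g - h) < ε)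
    {A : Set X} (hA : A ∈ 𝒜) (hAc : IsClosed A) (hAv : Convex ℝ A) {x₀ : X} (hx₀ : x₀ ∉ A) :
    ∃ S, IsFinBallHull S ∧ A ⊆ S ∧ x₀ ∉ S := by
  rcases A.eq_empty_or_nonempty with rfl | ⟨a₀, ha₀⟩
  · exact ⟨∅, isFinBallHull_empty, subset_rfl, notMem_empty x₀⟩
  set B := closure (absConvexHull ℝ (A ∪ {x₀}))
  have hB : B ∈ 𝒜 := h𝒜.closure_absConvexHull_mem _ (h𝒜.union_singleton_mem A hA x₀)
  have hBb := h𝒜.bounded B hB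
  have hAxB : A ∪ {x₀} ⊆ B := subset_absConvexHull.trans subset_closure
  have hAB : A ⊆ B := subset_union_left.trans hAxB
  have hx₀B : x₀ ∈ B := hAxB (Or.inr rfl)
  obtain ⟨g, u, hgA, hgx⟩ := geometric_hahn_banach_closed_point hAv hAc hx₀
  obtain ⟨_, ⟨l, hl, f₀, hf₀, rfl⟩, hgf⟩ := hdense g B hB _ (half_pos (sub_pos.2 hgx))
  obtain ⟨p, hp, hpx⟩ := exists_separating_of_dualSeminormOn_sub_lt hBb hAB hx₀B
    (fun a ha => (hgA a ha).le) hl hgf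
  obtain ⟨ε, hε, c, hc⟩ := exists_forall_mem_coneOf_seminormBall hBb hAB ha₀ hx₀B hp hpx
  obtain ⟨U, hU, hUne, hUC⟩ := hf₀ B hB ε hε
  obtain ⟨k', hk', V, δ, hδ, hVC⟩ := exists_norm_eq_one_forall_mem_coneOf hU hUne hUC
    fun h0 => by simpa using (hc 0 h0).2
  have hk'c := (hc k' (hVC k' hk'.le fun v _ => by linarith)).2
  have hr : 0 ≤ (k' x₀ - k' c) / 2 := by linarith
  obtain ⟨S, hS, hAS, hSk'⟩ := exists_isFinBallHull_superset_subset_halfSpace (hBb.subset hAB)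
    hk' V hδ hr fun k hk hkV a ha =>
      ((hc k (hVC k hk.le hkV)).1 a ha).trans (le_add_of_nonneg_right hr)
  exact ⟨S, hS, hAS, fun hx₀S => by linarith [hSk' x₀ hx₀S]⟩

theorem stmt4_general {X : Type*} [NormedAddCommGroup X] [NormedSpace ℝ X]
    (𝒜 : Set (Set X)) (h𝒜 : IsCompatible 𝒜)
    (hdense : ∀ g : X →L[ℝ] ℝ, ∀ (n : ℕ) (A : Fin n → Set X), (∀ i, A i ∈ 𝒜) →
      ∀ ε > (0 : ℝ), ∃ h ∈ coneOf {f : X →L[ℝ] ℝ | ‖f‖ = 1 ∧ IsASemiPC 𝒜 f},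
        ∀ i, dualSeminormOn (A i) (g - h) < ε) :
    HasAPropertyII 𝒜 := by
  have hdense₁ : ∀ g : X →L[ℝ] ℝ, ∀ B ∈ 𝒜, ∀ ε > (0 : ℝ),
      ∃ h ∈ coneOf {f : X →L[ℝ] ℝ | IsASemiPC 𝒜 f}, dualSeminormOn B (g - h) < ε := by
    intro g B hB ε hε
    obtain ⟨_, ⟨l, hl, f, hf, rfl⟩, hlt⟩ := hdense g 1 (fun _ => B) (fun _ => hB) ε hε
    exact ⟨l • f, ⟨l, hl, f, hf.2, rfl⟩, hlt 0⟩
  intro A hA hAc hAv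
  refine ⟨{S | IsFinBallHull S ∧ A ⊆ S}, fun S hS => hS.1,
    (subset_sInter fun S hS => hS.2).antisymm fun x hx => ?_⟩
  by_contra hxA
  obtain ⟨S, hS, hAS, hxS⟩ := exists_isFinBallHull_superset_notMem h𝒜 hdense₁ hA hAc hAv hxA
  exact hxS (hx S ⟨hS, hAS⟩)

theorem stmt4 {X : Type*} [NormedAddCommGroup X] [NormedSpace ℝ X] [CompleteSpace X]
    (𝒜 : Set (Set X)) (h𝒜 : IsCompatible 𝒜)
    (hdense : ∀ g : X →L[ℝ] ℝ, ∀ (n : ℕ) (A : Fin n → Set X), (∀ i, A i ∈ 𝒜) →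
      ∀ ε > (0 : ℝ), ∃ h ∈ coneOf {f : X →L[ℝ] ℝ | ‖f‖ = 1 ∧ IsASemiPC 𝒜 f},
        ∀ i, dualSeminormOn (A i) (g - h) < ε) :
    HasAPropertyII 𝒜 :=
  stmt4_general 𝒜 h𝒜 hdense
end

section
/- Every Banach space X has strong 𝒦-Property (II): for every convex compact (more generally, every convex member of the compatible collection 𝒦 generated by compact convex sets) K and every β ≥ 0 such that closure(K + βB_X) is a proper closed convex set, closure(K + βB_X) is an intersection of closed convex hulls of finitely many closed balls. -/
open Metric Set Pointwise

variable {X : Type*} [NormedAddCommGroup X] [NormedSpace ℝ X]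

/-- `𝒦`: the smallest compatible collection containing all compact convex sets. -/
def KColl (X : Type*) [NormedAddCommGroup X] [NormedSpace ℝ X] : Set (Set X) :=
  ⋂₀ {𝒜 : Set (Set X) | IsCompatible 𝒜 ∧ ∀ K : Set X, IsCompact K → Convex ℝ K → K ∈ 𝒜}

/-!
A separation argument. Every member of `𝒦` is totally bounded, since the totally
bounded sets form a compatible collection containing the compact convex sets. Let
`C = closure (K + β • B_X)` and `x ∉ C`; Hahn–Banach gives `f` and `u` with `f < u` on `C` and
`u < f x`, so `f k + β ‖f‖ ≤ u` on `K`. Covering `K` by finitely many `δ`-balls centred in `K`,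
with `δ ‖f‖ < f x - u`, the closed convex hull of the concentric `(β + δ)`-balls contains `C` and
lies in `{f ≤ u + δ ‖f‖}`, hence misses `x`.
-/

lemma totallyBounded_of_mem_KColl {K : Set X} (hK : K ∈ KColl X) : TotallyBounded K := by
  exact hK {A | TotallyBounded A} ⟨⟨fun A hA => hA.isBounded, fun A hA C hCA => hA.subset hCA,
    fun A hA x => hA.image (uniformContinuous_id.add uniformContinuous_const),
    fun A hA x => totallyBounded_union.2 ⟨hA, (finite_singleton x).totallyBounded⟩,
    fun A hA => (totallyBounded_absConvexHull.2 hA).closure⟩, fun K hK _ => hK.totallyBounded⟩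

lemma isFinBallHull_of_finite {t : Set X} (ht : t.Finite) (r : ℝ) :
    IsFinBallHull (closure (convexHull ℝ (⋃ c ∈ t, closedBall c r))) := by
  obtain ⟨n, c, rfl⟩ := ht.fin_embedding
  exact ⟨n, c, fun _ => r, by rw [biUnion_range]⟩

namespace ContinuousLinearMap

variable (f : X →L[ℝ] ℝ)

lemma apply_le_add_mul_norm_of_mem_closedBall {x y : X} {r : ℝ} (hy : y ∈ closedBall x r) :
    f y ≤ f x + r * ‖f‖ := by
  have hyx : ‖y - x‖ ≤ r := by rwa [← dist_eq_norm, ← mem_closedBall]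
  have : f (y - x) ≤ ‖f‖ * ‖y - x‖ := (le_abs_self _).trans (f.le_opNorm _)
  rw [map_sub] at this
  nlinarith [norm_nonneg f]

lemma add_mul_norm_le_of_forall_mem_closedBall {x : X} {r u : ℝ} (hr : 0 ≤ r)
    (h : ∀ y ∈ closedBall x r, f y ≤ u) : f x + r * ‖f‖ ≤ u := by
  rcases hr.eq_or_lt with rfl | hr
  · simpa using h x (mem_closedBall_self le_rfl)
  have hmem : ∀ b ∈ closedBall (0 : X) 1, x + r • b ∈ closedBall x r := fun b hb => by
    rw [mem_closedBall_zero_iff] at hb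
    rw [mem_closedBall, dist_eq_norm, add_sub_cancel_left, norm_smul, Real.norm_of_nonneg hr.le]
    exact mul_le_of_le_one_right hr.le hb
  have hbound : ∀ b ∈ closedBall (0 : X) 1, ‖f b‖ ≤ (u - f x) / r := fun b hb => by
    have h₁ := h _ (hmem b hb)
    have h₂ := h _ (hmem (-b) (by simpa using hb))
    simp only [map_add, map_smul, map_neg, smul_eq_mul] at h₁ h₂
    rw [le_div_iff₀ hr, Real.norm_eq_abs]
    cases abs_cases (f b) <;> nlinarith
  have : ‖f‖ ≤ (u - f x) / r := by
    rw [← f.sSup_unitClosedBall_eq_norm]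
    exact csSup_le ((nonempty_closedBall.2 zero_le_one).image _) (forall_mem_image.2 hbound)
  rw [le_div_iff₀ hr] at this
  linarith

end ContinuousLinearMap

lemma exists_isFinBallHull_of_notMem_closure_add_closedBall {K : Set X} (hK : TotallyBounded K)
    (hconv : Convex ℝ K) {β : ℝ} (hβ : 0 ≤ β) {x : X}
    (hx : x ∉ closure (K + closedBall (0 : X) β)) :
    ∃ S, IsFinBallHull S ∧ closure (K + closedBall (0 : X) β) ⊆ S ∧ x ∉ S := by
  obtain ⟨f, u, hfu, hux⟩ := geometric_hahn_banach_closed_point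
    (hconv.add (convex_closedBall 0 β)).closure isClosed_closure hx
  have hfK : ∀ k ∈ K, f k + β * ‖f‖ ≤ u := fun k hk =>
    f.add_mul_norm_le_of_forall_mem_closedBall hβ fun y hy =>
      (hfu y (subset_closure ⟨k, hk, y - k, by rwa [mem_closedBall_zero_iff, ← dist_eq_norm],
        add_sub_cancel k y⟩)).le
  set δ := (f x - u) / (‖f‖ + 1)
  have hδ : 0 < δ := div_pos (sub_pos.2 hux) (by positivity)
  have hδf : δ * ‖f‖ < f x - u :=
    calc δ * ‖f‖ < δ * (‖f‖ + 1) := mul_lt_mul_of_pos_left (lt_add_one _) hδ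
      _ = f x - u := div_mul_cancel₀ _ (by positivity)
  obtain ⟨t, htK, htfin, hKt⟩ := finite_approx_of_totallyBounded hK δ hδ
  refine ⟨_, isFinBallHull_of_finite htfin (β + δ), closure_mono ?_, fun hxS => ?_⟩
  · rintro _ ⟨k, hk, b, hb, rfl⟩
    obtain ⟨c, hc, hkc⟩ := mem_iUnion₂.1 (hKt hk)
    refine subset_convexHull ℝ _ (mem_iUnion₂.2 ⟨c, hc, ?_⟩)
    calc dist (k + b) c ≤ dist (k + b) k + dist k c := dist_triangle _ _ _
      _ ≤ β + δ := add_le_add (by simpa using hb) hkc.le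
  · have hS : convexHull ℝ (⋃ c ∈ t, closedBall c (β + δ)) ⊆ {y | f y ≤ u + δ * ‖f‖} := by
      refine convexHull_min (iUnion₂_subset fun c hc y hy => ?_)
        (convex_halfSpace_le f.isLinear _)
      show f y ≤ u + δ * ‖f‖
      linarith [f.apply_le_add_mul_norm_of_mem_closedBall hy, hfK c (htK hc)]
    have : f x ≤ u + δ * ‖f‖ := closure_minimal hS (isClosed_le f.continuous continuous_const) hxS
    linarith

theorem stmt14_general {X : Type*} [NormedAddCommGroup X] [NormedSpace ℝ X] :
    ∀ K ∈ KColl X, Convex ℝ K → ∀ β : ℝ, 0 ≤ β → closure (K + β • closedBall (0 : X) 1) ≠ Set.univ →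
      ∃ ℱ : Set (Set X), (∀ S ∈ ℱ, IsFinBallHull S) ∧ closure (K + β • closedBall (0 : X) 1) = ⋂₀ ℱ := by
  intro K hK hconv β hβ _
  rw [smul_unitClosedBall_of_nonneg hβ]
  refine ⟨{S | IsFinBallHull S ∧ closure (K + closedBall 0 β) ⊆ S}, fun S hS => hS.1,
    (subset_sInter fun S hS => hS.2).antisymm fun x hx => ?_⟩
  by_contra hxC
  obtain ⟨S, hS, hCS, hxS⟩ := exists_isFinBallHull_of_notMem_closure_add_closedBall
    (totallyBounded_of_mem_KColl hK) hconv hβ hxC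
  exact hxS (hx S ⟨hS, hCS⟩)

theorem stmt14 {X : Type*} [NormedAddCommGroup X] [NormedSpace ℝ X] [CompleteSpace X] :
    ∀ K ∈ KColl X, Convex ℝ K → ∀ β : ℝ, 0 ≤ β → closure (K + β • closedBall (0 : X) 1) ≠ Set.univ →
      ∃ ℱ : Set (Set X), (∀ S ∈ ℱ, IsFinBallHull S) ∧ closure (K + β • closedBall (0 : X) 1) = ⋂₀ ℱ :=
  stmt14_general
end
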